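/- For every odd integer N ≥ 1, the rational function P̃(X,Y) = X^{N−1}/Y − Y^{N−1}/X − (X^{N−1} − Y^{N−1})/(X+Y) is a nonzero element of FSh₂(N) which is not a polynomial. -/

import Mathlib

noncomputable section

open MvPolynomial

/-- The polynomial ring `ℚ[X,Y]`, with `X = X 0` and `Y = X 1`. -/
abbrev R2 : Type := MvPolynomial (Fin 2) ℚ

/-- The field of rational functions `ℚ(X,Y)`. -/
abbrev K2 : Type := FractionRing R2

/-- The substitution `(X, Y) ↦ (X + Y, -Y)` on polynomials. -/
def fayA : R2 →ₐ[ℚ] R2 := aeval ![X 0 + X 1, -X 1]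

/-- The substitution `(X, Y) ↦ (-X - Y, X)` on polynomials. -/
def rotA : R2 →ₐ[ℚ] R2 := aeval ![-X 0 - X 1, X 0]

/-- The substitution `(X, Y) ↦ (Y, X)` on polynomials. -/
def swapA : R2 →ₐ[ℚ] R2 := aeval ![X 1, X 0]

lemma fayA_invol : fayA.comp fayA = AlgHom.id ℚ R2 := by
  apply algHom_ext
  intro i
  fin_cases i <;> simp [fayA]

lemma rotA_cube : rotA.comp (rotA.comp rotA) = AlgHom.id ℚ R2 := by
  apply algHom_ext
  intro i
  fin_cases i <;> simp [rotA]

lemma swapA_invol : swapA.comp swapA = AlgHom.id ℚ R2 := by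
  apply algHom_ext
  intro i
  fin_cases i <;> simp [swapA]

lemma fayA_inj : Function.Injective fayA :=
  Function.LeftInverse.injective (g := fayA) fun x => by
    simpa using DFunLike.congr_fun fayA_invol x

lemma rotA_inj : Function.Injective rotA :=
  Function.LeftInverse.injective (g := rotA.comp rotA) fun x => by
    simpa using DFunLike.congr_fun rotA_cube x

lemma swapA_inj : Function.Injective swapA :=
  Function.LeftInverse.injective (g := swapA) fun x => by
    simpa using DFunLike.congr_fun swapA_invol x

/-- Lift an injective substitution on `ℚ[X,Y]` to the fraction field `ℚ(X,Y)`. -/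
def liftK (φ : R2 →ₐ[ℚ] R2) (hφ : Function.Injective φ) : K2 →+* K2 :=
  IsFractionRing.lift (g := (algebraMap R2 K2).comp φ.toRingHom)
    (fun _ _ h => hφ (IsFractionRing.injective R2 K2 h))

/-- `P(X,Y) ↦ P(X+Y, -Y)` as a `ℚ`-linear endomorphism of `ℚ(X,Y)`. -/
def fayL : K2 →ₗ[ℚ] K2 :=
  { toFun := (liftK fayA fayA_inj).toRatAlgHom, map_add' := map_add _,
    map_smul' := fun c x => map_rat_smul (liftK fayA fayA_inj) c x }

/-- `P(X,Y) ↦ P(-X-Y, X)` as a `ℚ`-linear endomorphism of `ℚ(X,Y)`. -/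
def rotL : K2 →ₗ[ℚ] K2 :=
  { toFun := (liftK rotA rotA_inj).toRatAlgHom, map_add' := map_add _,
    map_smul' := fun c x => map_rat_smul (liftK rotA rotA_inj) c x }

/-- `P(X,Y) ↦ P(Y, X)` as a `ℚ`-linear endomorphism of `ℚ(X,Y)`. -/
def swapL : K2 →ₗ[ℚ] K2 :=
  { toFun := (liftK swapA swapA_inj).toRatAlgHom, map_add' := map_add _,
    map_smul' := fun c x => map_rat_smul (liftK swapA swapA_inj) c x }

/-- The inclusion `ℚ[X,Y] → ℚ(X,Y)` as a `ℚ`-linear map. -/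
def algL : R2 →ₗ[ℚ] K2 :=
  { toFun := IsScalarTower.toAlgHom ℚ R2 K2, map_add' := map_add _,
    map_smul' := fun c x => map_rat_smul (IsScalarTower.toAlgHom ℚ R2 K2) c x }

/-- The element `X·Y ∈ ℚ(X,Y)`. -/
def xyK : K2 := algebraMap R2 K2 (X 0 * X 1)

/-- The length-two Fay-shuffle space `FSh₂(N)`: rational functions `P(X,Y)`,
homogeneous of degree `N - 2` with at most simple poles along `X = 0` and `Y = 0`
and no other poles (equivalently, `X·Y·P` is a homogeneous polynomial of degree `N`),
satisfying the Fay relation `P(X,Y) + P(X+Y,-Y) + P(-X-Y,X) = 0` and the shuffle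
relation `P(X,Y) + P(Y,X) = 0`. -/
def FSh (N : ℕ) : Submodule ℚ K2 :=
  (Submodule.map algL (homogeneousSubmodule (Fin 2) ℚ N)).comap (LinearMap.mulLeft ℚ xyK)
    ⊓ LinearMap.ker (LinearMap.id + fayL + rotL)
    ⊓ LinearMap.ker (LinearMap.id + swapL)


/-- The element `P̃(X,Y) = X^(N-1)/Y - Y^(N-1)/X - (X^(N-1) - Y^(N-1))/(X+Y)` of `ℚ(X,Y)`. -/
def Ptil (N : ℕ) : K2 :=
  (algebraMap R2 K2 (X 0)) ^ (N - 1) / algebraMap R2 K2 (X 1)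
    - (algebraMap R2 K2 (X 1)) ^ (N - 1) / algebraMap R2 K2 (X 0)
    - ((algebraMap R2 K2 (X 0)) ^ (N - 1) - (algebraMap R2 K2 (X 1)) ^ (N - 1))
        / (algebraMap R2 K2 (X 0) + algebraMap R2 K2 (X 1))

/-! With `m = N - 1` even, `P̃ = P(X, Y)` for the expression
`P(a, b) = a^m/b - b^m/a - (a^m - b^m)/(a + b)`, which makes sense in any field. Substitutions are
ring homomorphisms, so they act on `P̃` by substituting into `P`; after `(-b)^m = b^m` the Fay and
shuffle sums cancel term by term. Since `X + Y` divides `X^m - Y^m`, the product `X·Y·P̃` is a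
homogeneous polynomial of degree `N`, and it takes the value `1` at `(1, 0)`, so it is not divisible
by `X·Y`: `P̃` is not a polynomial. -/

section Field

variable {F : Type*} [Field F]

def ptilFun (m : ℕ) (a b : F) : F :=
  a ^ m / b - b ^ m / a - (a ^ m - b ^ m) / (a + b)

lemma map_ptilFun {G : Type*} [Field G] (f : F →+* G) (m : ℕ) (a b : F) :
    f (ptilFun m a b) = ptilFun m (f a) (f b) := by
  simp only [ptilFun, map_sub, map_div₀, map_pow, map_add]

lemma ptilFun_add_ptilFun_swap (m : ℕ) (a b : F) : ptilFun m a b + ptilFun m b a = 0 := by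
  rw [ptilFun, ptilFun, add_comm b a]
  ring

lemma ptilFun_fay {m : ℕ} (hm : Even m) (a b : F) :
    ptilFun m a b + ptilFun m (a + b) (-b) + ptilFun m (-a - b) a = 0 := by
  simp only [ptilFun, neg_sub_left, hm.neg_pow, div_neg]
  ring

lemma mul_ptilFun {m : ℕ} (hm : Even m) {a b : F} (ha : a ≠ 0) (hb : b ≠ 0) (hab : a + b ≠ 0) :
    a * b * ptilFun m a b
      = a ^ (m + 1) - b ^ (m + 1) - a * b * ∑ i ∈ Finset.range m, a ^ i * (-b) ^ (m - 1 - i) := by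
  have hgeom : (∑ i ∈ Finset.range m, a ^ i * (-b) ^ (m - 1 - i)) * (a + b) = a ^ m - b ^ m := by
    simpa [hm.neg_pow] using geom_sum₂_mul a (-b) m
  rw [ptilFun, ← hgeom]
  field_simp
  ring

end Field

local notation "𝐱" => algebraMap R2 K2 (X 0)
local notation "𝐲" => algebraMap R2 K2 (X 1)

lemma mem_FSh_iff {N : ℕ} {P : K2} :
    P ∈ FSh N ↔ (∃ q : R2, q.IsHomogeneous N ∧ algebraMap R2 K2 q = xyK * P)
      ∧ P + fayL P + rotL P = 0 ∧ P + swapL P = 0 := by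
  simp only [FSh, Submodule.mem_inf, Submodule.mem_comap, Submodule.mem_map,
    mem_homogeneousSubmodule, LinearMap.mem_ker, LinearMap.add_apply, LinearMap.id_apply,
    LinearMap.mulLeft_apply]
  exact and_assoc

lemma algebraMap_X_ne_zero (i : Fin 2) : algebraMap R2 K2 (X i) ≠ 0 :=
  (map_ne_zero_iff _ (IsFractionRing.injective R2 K2)).2 (X_ne_zero i)

lemma algebraMap_X_add_X_ne_zero : 𝐱 + 𝐲 ≠ 0 := by
  rw [← map_add, map_ne_zero_iff _ (IsFractionRing.injective R2 K2)]
  intro h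
  simpa using congrArg (eval fun _ => (1 : ℚ)) h

lemma Ptil_succ (m : ℕ) : Ptil (m + 1) = ptilFun m 𝐱 𝐲 := by
  rw [Ptil, Nat.add_sub_cancel]
  rfl

lemma liftK_algebraMap (φ : R2 →ₐ[ℚ] R2) (hφ : Function.Injective φ) (p : R2) :
    liftK φ hφ (algebraMap R2 K2 p) = algebraMap R2 K2 (φ p) :=
  IsFractionRing.lift_algebraMap _ _

lemma liftK_ptilFun (φ : R2 →ₐ[ℚ] R2) (hφ : Function.Injective φ) (m : ℕ) :
    liftK φ hφ (ptilFun m 𝐱 𝐲)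
      = ptilFun m (algebraMap R2 K2 (φ (X 0))) (algebraMap R2 K2 (φ (X 1))) := by
  rw [map_ptilFun, liftK_algebraMap, liftK_algebraMap]

lemma fayL_Ptil (m : ℕ) : fayL (Ptil (m + 1)) = ptilFun m (𝐱 + 𝐲) (-𝐲) := by
  rw [Ptil_succ]
  exact (liftK_ptilFun fayA fayA_inj m).trans (by simp [fayA])

lemma rotL_Ptil (m : ℕ) : rotL (Ptil (m + 1)) = ptilFun m (-𝐱 - 𝐲) 𝐱 := by
  rw [Ptil_succ]
  exact (liftK_ptilFun rotA rotA_inj m).trans (by simp [rotA])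

lemma swapL_Ptil (m : ℕ) : swapL (Ptil (m + 1)) = ptilFun m 𝐲 𝐱 := by
  rw [Ptil_succ]
  exact (liftK_ptilFun swapA swapA_inj m).trans (by simp [swapA])

/-- `X·Y·P̃`, with `(X^m - Y^m)/(X + Y)` written as the geometric sum in `X` and `-Y`. -/
def ptilNumerator (m : ℕ) : R2 :=
  X 0 ^ (m + 1) - X 1 ^ (m + 1) - X 0 * X 1 * ∑ i ∈ Finset.range m, X 0 ^ i * (-X 1) ^ (m - 1 - i)

lemma isHomogeneous_ptilNumerator (m : ℕ) : (ptilNumerator m).IsHomogeneous (m + 1) := by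
  refine ((isHomogeneous_X_pow _ _).sub (isHomogeneous_X_pow _ _)).sub ?_
  rw [Finset.mul_sum]
  refine IsHomogeneous.sum _ _ _ fun i hi => ?_
  have hdeg : m + 1 = (1 + 1) + (i + 1 * (m - 1 - i)) := by
    have := Finset.mem_range.1 hi
    omega
  rw [hdeg]
  exact ((isHomogeneous_X ℚ 0).mul (isHomogeneous_X ℚ 1)).mul
    ((isHomogeneous_X_pow 0 i).mul ((isHomogeneous_X ℚ 1).neg.pow _))

lemma eval_ptilNumerator (m : ℕ) : eval ![1, 0] (ptilNumerator m) = 1 := by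
  simp [ptilNumerator]

lemma algebraMap_ptilNumerator {m : ℕ} (hm : Even m) :
    algebraMap R2 K2 (ptilNumerator m) = xyK * Ptil (m + 1) := by
  rw [xyK, Ptil_succ, map_mul, mul_ptilFun hm (algebraMap_X_ne_zero 0) (algebraMap_X_ne_zero 1)
    algebraMap_X_add_X_ne_zero, ptilNumerator]
  simp only [map_sub, map_mul, map_pow, map_sum, map_neg]

lemma Ptil_notMem_range {m : ℕ} (hm : Even m) : Ptil (m + 1) ∉ Set.range (algebraMap R2 K2) := by
  rintro ⟨p, hp⟩
  have hnum : X 0 * X 1 * p = ptilNumerator m := by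
    apply IsFractionRing.injective R2 K2
    rw [algebraMap_ptilNumerator hm, map_mul, hp, xyK]
  simpa [eval_ptilNumerator] using congrArg (eval ![1, 0]) hnum

theorem Ptil_mem_FSh_general (N : ℕ) (hN : Odd N) :
    Ptil N ∈ FSh N ∧ Ptil N ≠ 0 ∧ Ptil N ∉ Set.range (algebraMap R2 K2) := by
  obtain ⟨k, rfl⟩ := hN
  have hm : Even (2 * k) := even_two_mul k
  have hnot := Ptil_notMem_range hm
  refine ⟨mem_FSh_iff.2 ⟨⟨_, isHomogeneous_ptilNumerator _, algebraMap_ptilNumerator hm⟩, ?_, ?_⟩,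
    fun h => hnot ⟨0, by rw [map_zero, h]⟩, hnot⟩
  · rw [fayL_Ptil, rotL_Ptil, Ptil_succ]
    exact ptilFun_fay hm _ _
  · rw [swapL_Ptil, Ptil_succ]
    exact ptilFun_add_ptilFun_swap _ _ _

/-- For every odd `N ≥ 1`, the rational function `P̃` is a nonzero element of
`FSh₂(N)` which is not a polynomial. -/
theorem Ptil_mem_FSh (N : ℕ) (hN : Odd N) (h1 : 1 ≤ N) :
    Ptil N ∈ FSh N ∧ Ptil N ≠ 0 ∧ Ptil N ∉ Set.range (algebraMap R2 K2) :=
  Ptil_mem_FSh_general N hN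

end
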